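/- arXiv:quant-ph/0407247 — 2 statements merged into one kernel-verified Lean document; each statement's English description precedes it below -/
import Mathlib

section
/- For every n, m ∈ ℕ with m ≥ 1, the set B = { a/‖a‖₂ : a ∈ A, a ≠ 0 }, where A = { (a₁,…,aₙ) : aᵢ = h/(nm), h ∈ {0, ±1, …, ±nm} }, is a (1/m)-covering of the unit sphere of ℝⁿ with the Euclidean norm; that is, for every x ∈ ℝⁿ with ‖x‖₂ = 1 there exists b ∈ B with ‖x − b‖₂ ≤ 1/m. -/
/-!
Round each coordinate of `x` to the nearest multiple of `1/(nm)`. Since `|xᵢ| ≤ 1`, the rounded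
point `a` lies in the grid, and `‖x - a‖ ≤ √n / (2nm) ≤ 1/(2m)`; in particular `a ≠ 0`.
Normalizing `a` moves it by `|‖a‖ - 1| ≤ ‖x - a‖`, so `‖x - a/‖a‖‖ ≤ 2‖x - a‖ ≤ 1/m`.
-/

/-- The grid `A` of points in `ℝⁿ` whose coordinates are integer multiples `h/(nm)`
with `|h| ≤ nm`. -/
def gridA (n m : ℕ) : Set (EuclideanSpace ℝ (Fin n)) :=
  {a | ∀ i, ∃ h : ℤ, |h| ≤ (n * m : ℤ) ∧ a i = (h : ℝ) / (n * m)}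

theorem round_mono {α : Type*} [Field α] [LinearOrder α] [IsStrictOrderedRing α] [FloorRing α] :
    Monotone (round : α → ℤ) := fun x y hxy => by
  simp only [round_eq]
  exact Int.floor_mono (by linarith)

theorem abs_round_le_of_abs_le {α : Type*} [Field α] [LinearOrder α] [IsStrictOrderedRing α]
    [FloorRing α] {x : α} {k : ℤ} (h : |x| ≤ k) : |round x| ≤ k := by
  obtain ⟨hlo, hhi⟩ := abs_le.1 h
  refine abs_le.2 ⟨?_, ?_⟩
  · simpa only [← Int.cast_neg, round_intCast] using round_mono hlo
  · simpa only [round_intCast] using round_mono hhi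

section RoundToGrid

variable {ι : Type*}

noncomputable def roundToGrid (N : ℝ) (x : EuclideanSpace ℝ ι) : EuclideanSpace ℝ ι :=
  WithLp.toLp 2 fun i => (round (x i * N) : ℝ) / N

theorem abs_sub_roundToGrid_apply_le {N : ℝ} (hN : 0 < N) (x : EuclideanSpace ℝ ι) (i : ι) :
    |x i - roundToGrid N x i| ≤ 1 / (2 * N) := by
  have hsub : x i - roundToGrid N x i = (x i * N - round (x i * N)) / N := by
    simp only [roundToGrid]
    field_simp
  rw [hsub, abs_div, abs_of_pos hN, div_le_div_iff₀ hN (by positivity)]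
  nlinarith [abs_sub_round (x i * N)]

theorem norm_sub_roundToGrid_le [Fintype ι] {N : ℝ} (hN : 0 < N) (x : EuclideanSpace ℝ ι) :
    ‖x - roundToGrid N x‖ ≤ √(Fintype.card ι) / (2 * N) := by
  have hsq : ‖x - roundToGrid N x‖ ^ 2 ≤ Fintype.card ι * (1 / (2 * N)) ^ 2 := by
    rw [EuclideanSpace.real_norm_sq_eq]
    calc ∑ i, (x - roundToGrid N x) i ^ 2 ≤ ∑ _i : ι, (1 / (2 * N)) ^ 2 :=
          Finset.sum_le_sum fun i _ => (abs_le.1 (abs_sub_roundToGrid_apply_le hN x i)).elim sq_le_sq'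
      _ = Fintype.card ι * (1 / (2 * N)) ^ 2 := by simp
  calc ‖x - roundToGrid N x‖ ≤ √(Fintype.card ι * (1 / (2 * N)) ^ 2) :=
        Real.le_sqrt_of_sq_le hsq
    _ = √(Fintype.card ι) / (2 * N) := by
        rw [Real.sqrt_mul (Nat.cast_nonneg _), Real.sqrt_sq (by positivity), mul_one_div]

end RoundToGrid

theorem roundToGrid_mem_gridA {n m : ℕ} (hnm : 0 < n * m) {x : EuclideanSpace ℝ (Fin n)}
    (hx : ‖x‖ ≤ 1) : roundToGrid (n * m) x ∈ gridA n m := by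
  intro i
  refine ⟨round (x i * (n * m)), abs_round_le_of_abs_le ?_, rfl⟩
  have hxi : |x i| ≤ 1 := (PiLp.norm_apply_le x i).trans hx
  have hN : (0 : ℝ) < n * m := by exact_mod_cast hnm
  push_cast
  rw [abs_mul, abs_of_pos hN]
  nlinarith [abs_nonneg (x i)]

theorem norm_sub_inv_norm_smul_self_le {E : Type*} [SeminormedAddCommGroup E] [NormedSpace ℝ E]
    (a : E) : ‖a - ‖a‖⁻¹ • a‖ ≤ |‖a‖ - 1| := by
  rcases eq_or_ne ‖a‖ 0 with ha | ha
  · simp [ha]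
  refine le_of_eq ?_
  calc ‖a - ‖a‖⁻¹ • a‖ = |1 - ‖a‖⁻¹| * ‖a‖ := by
        rw [← Real.norm_eq_abs, ← norm_smul, sub_smul, one_smul]
    _ = |‖a‖ - 1| := by
        rw [← abs_norm a, ← abs_mul, abs_norm a, sub_mul, inv_mul_cancel₀ ha, one_mul]

theorem norm_sub_inv_norm_smul_le {E : Type*} [SeminormedAddCommGroup E] [NormedSpace ℝ E]
    {x : E} (hx : ‖x‖ = 1) (a : E) : ‖x - ‖a‖⁻¹ • a‖ ≤ 2 * ‖x - a‖ := by
  have hnormalize : ‖a - ‖a‖⁻¹ • a‖ ≤ ‖x - a‖ :=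
    (norm_sub_inv_norm_smul_self_le a).trans <| by
      rw [← hx, norm_sub_rev]; exact abs_norm_sub_norm_le a x
  calc ‖x - ‖a‖⁻¹ • a‖ ≤ ‖x - a‖ + ‖a - ‖a‖⁻¹ • a‖ := norm_sub_le_norm_sub_add_norm_sub _ _ _
    _ ≤ 2 * ‖x - a‖ := by linarith

theorem norm_sub_roundToGrid_nat_mul_le {n m : ℕ} (hn : 0 < n) (hm : 0 < m)
    (x : EuclideanSpace ℝ (Fin n)) : ‖x - roundToGrid (n * m) x‖ ≤ 1 / (2 * m) := by
  have hn1 : (1 : ℝ) ≤ n := by exact_mod_cast hn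
  have hm0 : (0 : ℝ) < m := by exact_mod_cast hm
  calc ‖x - roundToGrid (n * m) x‖ ≤ √n / (2 * (n * m)) := by
        simpa using norm_sub_roundToGrid_le (by positivity) x
    _ ≤ 1 / (2 * m) := by
        have hsqrt : √(n : ℝ) ≤ n := Real.sqrt_le_self_iff.2 (Or.inr hn1)
        rw [div_le_div_iff₀ (by positivity) (by positivity)]
        nlinarith

/-- the normalized nonzero grid points form a `1/m`-covering of the
unit sphere of `ℝⁿ` with the Euclidean norm. -/
theorem grid_covering (n m : ℕ) (hm : 1 ≤ m)
    (x : EuclideanSpace ℝ (Fin n)) (hx : ‖x‖ = 1) :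
    ∃ a ∈ gridA n m, a ≠ 0 ∧ ‖x - ‖a‖⁻¹ • a‖ ≤ 1 / m := by
  have hn : 0 < n := Nat.pos_of_ne_zero <| by
    rintro rfl
    simp [Subsingleton.elim x 0] at hx
  have hm1 : (1 : ℝ) ≤ m := by exact_mod_cast hm
  set a := roundToGrid ((n : ℝ) * m) x
  have hxa : ‖x - a‖ ≤ 1 / (2 * m) := norm_sub_roundToGrid_nat_mul_le hn hm x
  have ha : a ≠ 0 := by
    rintro ha
    rw [ha, sub_zero, hx, le_div_iff₀ (by positivity)] at hxa
    linarith
  refine ⟨a, roundToGrid_mem_gridA (Nat.mul_pos hn hm) hx.le, ha, ?_⟩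
  calc ‖x - ‖a‖⁻¹ • a‖ ≤ 2 * ‖x - a‖ := norm_sub_inv_norm_smul_le hx a
    _ ≤ 2 * (1 / (2 * m)) := by gcongr
    _ = 1 / m := by field_simp
end

section
/- For every n, m ∈ ℕ with m ≥ 2 there exist N ≤ (2nm+1)ⁿ and a linear operator I : ℓ₂ⁿ(ℝ) → ℓ_∞^N(ℝ) such that ‖I(x)‖_∞ ≤ ‖x‖₂ and ‖x‖₂ ≤ (m/(m−1))‖I(x)‖_∞ for all x ∈ ℝⁿ. -/
/-!
Normalise the points of the grid `(M⁻¹ℤ)ⁿ ∩ [-1, 1]ⁿ`, `M = nm`, and let `I` list the inner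
products with them. Every unit vector `y` lies within `n/(2M) = 1/(2m)` of a grid point `g`, and
then `⟪g/‖g‖, y⟫ ≥ (1 - 1/(2m))/(1 + 1/(2m)) ≥ (m - 1)/m`, so the largest coordinate of `I y`
is at least `(m - 1)/m`.
-/

open Finset
open scoped RealInnerProductSpace

theorem exists_linearMap_pi_norm_le_and_le_norm {E ι : Type*} [NormedAddCommGroup E]
    [InnerProductSpace ℝ E] [Fintype ι] (u : ι → E) (hu : ∀ i, ‖u i‖ ≤ 1) {c : ℝ}
    (hc : ∀ y : E, ‖y‖ = 1 → ∃ i, c ≤ ⟪u i, y⟫) :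
    ∃ I : E →ₗ[ℝ] (ι → ℝ), ∀ x, ‖I x‖ ≤ ‖x‖ ∧ c * ‖x‖ ≤ ‖I x‖ := by
  let I : E →ₗ[ℝ] (ι → ℝ) := LinearMap.pi fun i => innerₛₗ ℝ (u i)
  refine ⟨I, fun x => ⟨?_, ?_⟩⟩
  · refine (pi_norm_le_iff_of_nonneg (norm_nonneg x)).2 fun i => ?_
    calc ‖⟪u i, x⟫‖ ≤ ‖u i‖ * ‖x‖ := norm_inner_le_norm _ _
      _ ≤ ‖x‖ := mul_le_of_le_one_left (norm_nonneg x) (hu i)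
  · rcases eq_or_ne x 0 with rfl | hx
    · simp
    obtain ⟨i, hi⟩ := hc (‖x‖⁻¹ • x) (norm_smul_inv_norm hx)
    calc c * ‖x‖ ≤ ⟪u i, ‖x‖⁻¹ • x⟫ * ‖x‖ := by gcongr
      _ = ⟪u i, x⟫ := by rw [real_inner_smul_right]; field_simp [norm_ne_zero_iff.2 hx]
      _ ≤ ‖I x i‖ := Real.le_norm_self _
      _ ≤ ‖I x‖ := norm_le_pi_norm _ i

theorem div_le_inner_inv_norm_smul {E : Type*} [NormedAddCommGroup E] [InnerProductSpace ℝ E]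
    {y g : E} {δ : ℝ} (hy : ‖y‖ = 1) (hyg : ‖y - g‖ ≤ δ) (hδ : δ < 1) :
    (1 - δ) / (1 + δ) ≤ ⟪‖g‖⁻¹ • g, y⟫ := by
  have hinner : 1 - δ ≤ ⟪g, y⟫ := by
    have : ⟪y - g, y⟫ ≤ δ := (real_inner_le_norm _ _).trans (by rwa [hy, mul_one])
    rw [inner_sub_left, real_inner_self_eq_norm_sq, hy] at this
    linarith
  have hg_lower : 1 - δ ≤ ‖g‖ :=
    hinner.trans ((real_inner_le_norm g y).trans_eq (by rw [hy, mul_one]))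
  have hg_upper : ‖g‖ ≤ 1 + δ := by
    have := norm_sub_norm_le g y
    rw [norm_sub_rev] at this
    linarith
  rw [real_inner_smul_left, inv_mul_eq_div]
  calc (1 - δ) / (1 + δ) ≤ (1 - δ) / ‖g‖ := by gcongr; linarith
    _ ≤ ⟪g, y⟫ / ‖g‖ := by gcongr

theorem EuclideanSpace.norm_le_sum_abs {ι : Type*} [Fintype ι] (v : EuclideanSpace ℝ ι) :
    ‖v‖ ≤ ∑ i, |v i| := by
  conv_lhs => rw [← (EuclideanSpace.basisFun ι ℝ).sum_repr v]
  refine (norm_sum_le _ _).trans_eq (sum_congr rfl fun i _ => ?_)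
  simp [norm_smul]

theorem exists_fin_abs_sub_le_half {t : ℝ} {K : ℕ} (ht₀ : 0 ≤ t) (htK : t ≤ K) :
    ∃ k : Fin (K + 1), |t - k| ≤ 1 / 2 := by
  have h₀ : 0 ≤ t + 1 / 2 := by linarith
  refine ⟨⟨⌊t + 1 / 2⌋₊, (Nat.floor_lt h₀).2 (by push_cast; linarith)⟩, abs_le.2 ⟨?_, ?_⟩⟩
    <;> dsimp only
  · linarith [Nat.floor_le h₀]
  · linarith [Nat.lt_floor_add_one (t + 1 / 2)]

noncomputable def gridPoint (M : ℕ) {n : ℕ} (j : Fin n → Fin (2 * M + 1)) :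
    EuclideanSpace ℝ (Fin n) :=
  WithLp.toLp 2 fun i => (j i : ℝ) / M - 1

theorem exists_abs_sub_div_sub_one_le {M : ℕ} (hM : 0 < M) {s : ℝ} (hs : |s| ≤ 1) :
    ∃ k : Fin (2 * M + 1), |s - ((k : ℝ) / M - 1)| ≤ 1 / (2 * M) := by
  have hM' : (0 : ℝ) < M := by exact_mod_cast hM
  obtain ⟨hs₀, hs₁⟩ := abs_le.1 hs
  obtain ⟨k, hk⟩ := exists_fin_abs_sub_le_half (t := M * (s + 1)) (K := 2 * M)
    (by nlinarith) (by push_cast; nlinarith)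
  refine ⟨k, ?_⟩
  have hrescale : s - ((k : ℝ) / M - 1) = (M * (s + 1) - k) / M := by field_simp; ring
  rw [hrescale, abs_div, abs_of_pos hM']
  exact (div_le_div_of_nonneg_right hk hM'.le).trans_eq (by ring)

theorem exists_norm_sub_gridPoint_le {M n : ℕ} (hM : 0 < M) {y : EuclideanSpace ℝ (Fin n)}
    (hy : ‖y‖ ≤ 1) : ∃ j, ‖y - gridPoint M j‖ ≤ n / (2 * M) := by
  choose j hj using fun i =>
    exists_abs_sub_div_sub_one_le hM (((Real.norm_eq_abs _).symm.trans_le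
      (PiLp.norm_apply_le y i)).trans hy)
  refine ⟨j, (EuclideanSpace.norm_le_sum_abs _).trans ?_⟩
  calc ∑ i, |(y - gridPoint M j) i| ≤ ∑ _i : Fin n, 1 / (2 * (M : ℝ)) := sum_le_sum fun i _ => hj i
    _ = n / (2 * M) := by simp [div_eq_mul_inv]

theorem exists_sub_one_div_le_inner_gridPoint {n m : ℕ} (hn : 0 < n) (hm : 0 < m)
    {y : EuclideanSpace ℝ (Fin n)} (hy : ‖y‖ = 1) :
    ∃ j, ((m : ℝ) - 1) / m ≤ ⟪‖gridPoint (n * m) j‖⁻¹ • gridPoint (n * m) j, y⟫ := by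
  have hm' : (0 : ℝ) < m := by exact_mod_cast hm
  obtain ⟨j, hj⟩ := exists_norm_sub_gridPoint_le (M := n * m) (by positivity) hy.le
  have hδ : (n : ℝ) / (2 * (n * m : ℕ)) = 1 / (2 * m) := by
    have : (n : ℝ) ≠ 0 := by positivity
    push_cast
    field_simp
  refine ⟨j, le_trans ?_ (div_le_inner_inv_norm_smul hy (hj.trans_eq hδ) ?_)⟩
  · rw [show (1 - 1 / (2 * m)) / (1 + 1 / (2 * m)) = (2 * m - 1) / (2 * m + 1 : ℝ) by field_simp,
      div_le_div_iff₀ hm' (by positivity)]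
    linarith
  · rw [div_lt_one (by positivity)]
    linarith [(Nat.one_le_cast (α := ℝ)).2 hm]

/-- for `m ≥ 2` there are `N ≤ (2nm+1)ⁿ` and a linear operator
`I : ℓ₂ⁿ(ℝ) → ℓ_∞^N(ℝ)` with `‖I x‖_∞ ≤ ‖x‖₂` and `‖x‖₂ ≤ (m/(m−1))‖I x‖_∞`. -/
theorem exists_embedding_into_linf (n m : ℕ) (hm : 2 ≤ m) :
    ∃ N : ℕ, N ≤ (2 * n * m + 1) ^ n ∧
      ∃ I : EuclideanSpace ℝ (Fin n) →ₗ[ℝ] (Fin N → ℝ),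
        ∀ x : EuclideanSpace ℝ (Fin n),
          ‖I x‖ ≤ ‖x‖ ∧ ‖x‖ ≤ (m / (m - 1) : ℝ) * ‖I x‖ := by
  rcases n.eq_zero_or_pos with rfl | hn
  · exact ⟨0, Nat.zero_le _, 0, fun x => by
    obtain rfl := Subsingleton.elim x 0
    simp only [map_zero, norm_zero, mul_zero, le_refl, and_self]⟩
  have hm₁ : (0 : ℝ) < m - 1 := sub_pos.2 (Nat.one_lt_cast.2 hm)
  have hcard : Fintype.card (Fin n → Fin (2 * (n * m) + 1)) = (2 * n * m + 1) ^ n := by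
    simp [mul_assoc]
  let e := Fintype.equivFin (Fin n → Fin (2 * (n * m) + 1))
  let u k := ‖gridPoint (n * m) (e.symm k)‖⁻¹ • gridPoint (n * m) (e.symm k)
  have hnet : ∀ y, ‖y‖ = 1 → ∃ k, ((m : ℝ) - 1) / m ≤ ⟪u k, y⟫ := fun y hy => by
    obtain ⟨j, hj⟩ := exists_sub_one_div_le_inner_gridPoint hn (zero_lt_two.trans_le hm) hy
    exact ⟨e j, by simpa only [u, e.symm_apply_apply] using hj⟩
  obtain ⟨I, hI⟩ := exists_linearMap_pi_norm_le_and_le_norm u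
    (fun k => by simpa using inv_norm_smul_mem_unitClosedBall (gridPoint (n * m) (e.symm k))) hnet
  refine ⟨_, hcard.le, I, fun x => ⟨(hI x).1, ?_⟩⟩
  calc ‖x‖ = m / (m - 1) * ((m - 1) / m * ‖x‖) := by field_simp
    _ ≤ m / (m - 1) * ‖I x‖ := by gcongr; exact (hI x).2
end
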